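/- Let Ω ⊂ ℝ^n be bounded smooth with 0 ∈ Ω and β ∈ [0,n). With G = G_{Ω,0} the n-Green's function and I_Ω(0) the conformal incenter at 0, one has lim_{t→∞} ((n−β)/(ω_{n-1} e^{−α_{n,β} t})) ∫_{{G > t}} |y|^{−β} dy = I_Ω(0)^{n−β}, where α_{n,β} = (n−β) ω_{n-1}^{1/(n-1)}. -/

import Mathlib

open MeasureTheory Metric Set Filter
open scoped RealInnerProductSpace ENNReal Topology NNReal

noncomputable section

abbrev E (n : ℕ) := EuclideanSpace ℝ (Fin n)

/-- ω_{n-1}, the H^{n-1} measure of the unit sphere, equals n times the volume of the unit ball. -/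
def sphereVol (n : ℕ) : ℝ := n * (volume (Metric.ball (0 : E n) 1)).toReal

/-- `G` is the n-Green's function of `Ω` with singularity at `x`: it vanishes on the boundary,
is nonnegative, and satisfies ∫_Ω |∇G|^{n-2}⟨∇G,∇φ⟩ = φ(x) for all test functions φ. -/
def IsGreen (n : ℕ) (Ω : Set (E n)) (x : E n) (G : E n → ℝ) : Prop :=
  (∀ y ∈ frontier Ω, G y = 0) ∧ (∀ y ∈ Ω, 0 ≤ G y) ∧
    ∀ φ : E n → ℝ, ContDiff ℝ 1 φ → tsupport φ ⊆ Ω →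
      (∫ y in Ω, ‖gradient G y‖ ^ ((n : ℝ) - 2) * ⟪gradient G y, gradient φ y⟫) = φ x

lemma nontrivial_E (n : ℕ) (hn : 1 ≤ n) : Nontrivial (E n) :=
  Module.nontrivial_of_finrank_pos (R := ℝ)
    (by rw [finrank_euclideanSpace_fin]; omega)

lemma sphereVol_pos (n : ℕ) (hn : 1 ≤ n) : 0 < sphereVol n := by
  haveI := nontrivial_E n hn
  have h1 : (0:ℝ) < n := by exact_mod_cast hn
  have h2 : 0 < (volume (Metric.ball (0 : E n) 1)).toReal :=
    ENNReal.toReal_pos (measure_ball_pos volume 0 one_pos).ne' measure_ball_lt_top.ne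
  unfold sphereVol
  positivity

lemma polar_ball (n : ℕ) (hn : 2 ≤ n) {r : ℝ} (hr : 0 < r) (h : ℝ → ℝ) :
    ∫ x in Metric.ball (0 : E n) r, h ‖x‖ =
      (n : ℝ) * (volume (Metric.ball (0 : E n) 1)).toReal *
        ∫ y in Set.Ioo (0:ℝ) r, y ^ (n - 1) * h y := by
  haveI := nontrivial_E n (by omega)
  have key := MeasureTheory.integral_fun_norm_addHaar (volume : Measure (E n))
      ((Set.Ioo (0:ℝ) r).indicator h)
  rw [show Module.finrank ℝ (E n) = n from finrank_euclideanSpace_fin] at key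
  have hL : (fun x : E n => ((Set.Ioo (0:ℝ) r).indicator h) ‖x‖) =
      (Metric.ball (0 : E n) r \ {0}).indicator (fun x => h ‖x‖) := by
    funext x
    have hx : (‖x‖ ∈ Set.Ioo (0:ℝ) r) ↔ x ∈ Metric.ball (0 : E n) r \ {0} := by
      simp only [Set.mem_Ioo, Set.mem_diff, mem_ball_zero_iff, Set.mem_singleton_iff,
        norm_pos_iff]
      tauto
    by_cases hmem : ‖x‖ ∈ Set.Ioo (0:ℝ) r
    · rw [Set.indicator_of_mem hmem, Set.indicator_of_mem (hx.mp hmem)]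
    · rw [Set.indicator_of_notMem hmem, Set.indicator_of_notMem (fun c => hmem (hx.mpr c))]
  rw [hL, integral_indicator (Metric.isOpen_ball.measurableSet.diff (measurableSet_singleton 0))]
    at key
  have hae : (Metric.ball (0 : E n) r \ {0} : Set (E n)) =ᵐ[volume] Metric.ball (0 : E n) r :=
    MeasureTheory.diff_ae_eq_self.mpr (measure_mono_null Set.inter_subset_right (measure_singleton 0))
  rw [setIntegral_congr_set hae] at key
  rw [setIntegral_congr_fun measurableSet_Ioi
      (g := (Set.Ioo (0:ℝ) r).indicator (fun y => y ^ (n - 1) * h y))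
      (fun y _ => by
        simp only [Set.indicator_apply, smul_eq_mul, mul_ite, mul_zero])] at key
  rw [setIntegral_indicator measurableSet_Ioo,
    Set.inter_eq_self_of_subset_right Set.Ioo_subset_Ioi_self] at key
  rw [key, nsmul_eq_mul, smul_eq_mul, ← mul_assoc]
  rfl

lemma one_dim_integrable (n : ℕ) (hn : 2 ≤ n) {β : ℝ} (hβn : β < n) {r : ℝ} (hr : 0 < r) :
    IntegrableOn (fun y : ℝ => y ^ ((n:ℝ) - 1 - β)) (Set.Ioo 0 r) := by
  have hp : (-1 : ℝ) < (n:ℝ) - 1 - β := by linarith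
  have := intervalIntegral.intervalIntegrable_rpow' (a := 0) (b := r) hp
  rw [intervalIntegrable_iff_integrableOn_Ioc_of_le hr.le] at this
  exact this.mono_set Set.Ioo_subset_Ioc_self

lemma one_dim_val (n : ℕ) (hn : 2 ≤ n) {β : ℝ} (hβn : β < n) {r : ℝ} (hr : 0 < r) :
    ∫ y in Set.Ioo (0:ℝ) r, y ^ ((n:ℝ) - 1 - β) = r ^ ((n:ℝ) - β) / ((n:ℝ) - β) := by
  have hp : (-1 : ℝ) < (n:ℝ) - 1 - β := by linarith
  rw [← integral_Ioc_eq_integral_Ioo, ← intervalIntegral.integral_of_le hr.le,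
    integral_rpow (Or.inl hp)]
  rw [Real.zero_rpow (by linarith : ((n:ℝ) - 1 - β) + 1 ≠ 0)]
  norm_num
  ring_nf

lemma pow_eq_rpow_on_Ioo (n : ℕ) (hn : 2 ≤ n) {β : ℝ} {r : ℝ} :
    ∀ y ∈ Set.Ioo (0:ℝ) r, y ^ (n - 1) * y ^ (-β) = y ^ ((n:ℝ) - 1 - β) := by
  intro y hy
  rw [← Real.rpow_natCast y (n - 1), ← Real.rpow_add hy.1]
  congr 1
  rw [Nat.cast_sub (by omega : 1 ≤ n), Nat.cast_one]
  ring

lemma integral_ball_rpow (n : ℕ) (hn : 2 ≤ n) {β : ℝ} (hβn : β < n) {r : ℝ} (hr : 0 < r) :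
    ∫ y in Metric.ball (0 : E n) r, ‖y‖ ^ (-β) =
      sphereVol n * r ^ ((n:ℝ) - β) / ((n:ℝ) - β) := by
  rw [polar_ball n hn hr (fun s => s ^ (-β)),
    setIntegral_congr_fun measurableSet_Ioo (pow_eq_rpow_on_Ioo n hn),
    one_dim_val n hn hβn hr]
  unfold sphereVol
  ring

lemma integrableOn_ball_rpow (n : ℕ) (hn : 2 ≤ n) {β : ℝ} (hβ0 : 0 ≤ β) (hβn : β < n)
    {r : ℝ} (hr : 0 < r) :
    IntegrableOn (fun y : E n => ‖y‖ ^ (-β)) (Metric.ball 0 r) := by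
  haveI := nontrivial_E n (by omega)
  have hm : Measurable (fun y : E n => ‖y‖ ^ (-β)) :=
    by fun_prop
  have hnn : ∀ y : E n, 0 ≤ ‖y‖ ^ (-β) := fun y => Real.rpow_nonneg (norm_nonneg y) _
  refine ⟨(hm.aestronglyMeasurable).restrict, ?_⟩
  rw [hasFiniteIntegral_iff_ofReal (ae_of_all _ hnn)]
  set c := (volume (Metric.ball (0 : E n) 1)).toReal with hc
  set B : ℝ := (n : ℝ) * c * (r ^ ((n:ℝ) - β) / ((n:ℝ) - β)) with hB
  -- truncations
  have hmono : Monotone (fun (m : ℕ) (x : E n) => ENNReal.ofReal (min (‖x‖ ^ (-β)) m)) := by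
    intro m m' hmm x
    exact ENNReal.ofReal_le_ofReal (min_le_min le_rfl (by exact_mod_cast hmm))
  have hsup : ∀ x : E n, (⨆ m : ℕ, ENNReal.ofReal (min (‖x‖ ^ (-β)) m)) =
      ENNReal.ofReal (‖x‖ ^ (-β)) := by
    intro x
    refine le_antisymm (iSup_le fun m => ENNReal.ofReal_le_ofReal (min_le_left _ _)) ?_
    refine le_iSup_of_le ⌈‖x‖ ^ (-β)⌉₊ (le_of_eq ?_)
    rw [min_eq_left (Nat.le_ceil _)]
  have hmsr : ∀ m : ℕ, Measurable (fun x : E n => ENNReal.ofReal (min (‖x‖ ^ (-β)) m)) :=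
    fun m => (hm.min measurable_const).ennreal_ofReal
  calc ∫⁻ x in Metric.ball (0 : E n) r, ENNReal.ofReal (‖x‖ ^ (-β))
      = ∫⁻ x in Metric.ball (0 : E n) r, ⨆ m : ℕ, ENNReal.ofReal (min (‖x‖ ^ (-β)) m) := by
        simp_rw [hsup]
    _ = ⨆ m : ℕ, ∫⁻ x in Metric.ball (0 : E n) r, ENNReal.ofReal (min (‖x‖ ^ (-β)) m) :=
        lintegral_iSup (fun m => hmsr m) (fun m m' hmm => fun x => hmono hmm x)
    _ ≤ ENNReal.ofReal B := by
        refine iSup_le fun m => ?_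
        have hint : IntegrableOn (fun x : E n => min (‖x‖ ^ (-β)) m)
            (Metric.ball (0 : E n) r) := by
          refine Measure.integrableOn_of_bounded measure_ball_lt_top.ne
            ((hm.min measurable_const).aestronglyMeasurable) (M := m) (ae_of_all _ fun x => ?_)
          rw [Real.norm_eq_abs, abs_of_nonneg (le_min (hnn x) m.cast_nonneg)]
          exact min_le_right _ _
        rw [← ofReal_integral_eq_lintegral_ofReal hint
          (ae_of_all _ fun x => le_min (hnn x) m.cast_nonneg)]
        refine ENNReal.ofReal_le_ofReal ?_
        have heq : ∫ x in Metric.ball (0 : E n) r, min (‖x‖ ^ (-β)) m =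
            (n : ℝ) * c * ∫ y in Set.Ioo (0:ℝ) r, y ^ (n - 1) * min (y ^ (-β)) m :=
          polar_ball n hn hr (fun s => min (s ^ (-β)) m)
        rw [heq, hB]
        have hmc : 0 ≤ (n : ℝ) * c := by positivity
        refine mul_le_mul_of_nonneg_left ?_ hmc
        rw [← one_dim_val n hn hβn hr]
        refine integral_mono_of_nonneg (ae_restrict_iff' measurableSet_Ioo |>.mpr
            (ae_of_all _ fun y hy => ?_))
          (one_dim_integrable n hn hβn hr) (ae_restrict_iff' measurableSet_Ioo |>.mpr
            (ae_of_all _ fun y hy => ?_))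
        · dsimp only
          exact mul_nonneg (pow_nonneg hy.1.le _)
            (le_min (Real.rpow_nonneg hy.1.le _) m.cast_nonneg)
        · dsimp only
          rw [← pow_eq_rpow_on_Ioo n hn y hy]
          exact mul_le_mul_of_nonneg_left (min_le_left _ _) (pow_nonneg hy.1.le _)
    _ < ⊤ := ENNReal.ofReal_lt_top

set_option maxHeartbeats 1000000 in
/-- Weighted asymptotics of the superlevel sets of the n-Green's function:
((n-β)/(ω_{n-1} e^{-α_{n,β} t})) ∫_{{G>t}} |y|^{-β} dy → I_Ω(0)^{n-β} as t → ∞,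
where α_{n,β} = (n-β) ω_{n-1}^{1/(n-1)} and I_Ω(0) = e^{-ω^{1/(n-1)} H(0)}. -/
theorem stmt7 (n : ℕ) (hn : 2 ≤ n) (β : ℝ) (hβ0 : 0 ≤ β) (hβn : β < n)
    (Ω : Set (E n)) (hΩ : IsOpen Ω) (hb : Bornology.IsBounded Ω) (h0 : (0 : E n) ∈ Ω)
    (G H : E n → ℝ) (hG : IsGreen n Ω 0 G)
    (hH : ContinuousOn H (closure Ω))
    (hdec : ∀ y ∈ Ω, y ≠ 0 →
      G y = -(sphereVol n ^ (1 / ((n : ℝ) - 1)))⁻¹ * Real.log ‖y‖ - H y) :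
    Tendsto (fun t : ℝ => (((n : ℝ) - β) /
        (sphereVol n * Real.exp (-(((n : ℝ) - β) * sphereVol n ^ (1 / ((n : ℝ) - 1))) * t))) *
        ∫ y in {y ∈ Ω | t < G y}, ‖y‖ ^ (-β)) atTop
      (𝓝 (Real.exp (-(sphereVol n ^ (1 / ((n : ℝ) - 1))) * H 0) ^ ((n : ℝ) - β))) := by
  haveI := nontrivial_E n (by omega)
  have hωpos : 0 < sphereVol n := sphereVol_pos n (by omega)
  set ω := sphereVol n with hω
  set κ := ω ^ (1 / ((n : ℝ) - 1)) with hκ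
  have hκpos : 0 < κ := Real.rpow_pos_of_pos hωpos _
  set ν := (n : ℝ) - β with hν
  have hνpos : 0 < ν := sub_pos.mpr hβn
  set A := ν * κ with hA
  have hApos : 0 < A := mul_pos hνpos hκpos
  -- the limit value
  have hlval : Real.exp (-κ * H 0) ^ ν = Real.exp (-(A * (H 0 + 0))) := by
    rw [← Real.exp_mul, hA]; ring_nf
  rw [hlval]
  -- continuity of H at 0
  have hcl : closure Ω ∈ 𝓝 (0 : E n) := mem_of_superset (hΩ.mem_nhds h0) subset_closure
  have hHc : ContinuousAt H 0 := hH.continuousAt hcl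
  rw [Metric.continuousAt_iff] at hHc
  -- uniform bound for H on closure Ω
  have hcomp : IsCompact (closure Ω) :=
    Metric.isCompact_of_isClosed_isBounded isClosed_closure hb.closure
  obtain ⟨M, hM⟩ := hcomp.exists_bound_of_continuousOn hH
  have hM0 : |H 0| ≤ M := by simpa [Real.norm_eq_abs] using hM 0 (subset_closure h0)
  -- ball around 0 inside Ω
  obtain ⟨δ0, hδ0pos, hδ0⟩ := Metric.isOpen_iff.mp hΩ 0 h0
  rw [Metric.tendsto_nhds]
  intro ε hε
  -- choose ε' using continuity of s ↦ exp(-(A (H0 + s)))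
  have hcont : ContinuousAt (fun s : ℝ => Real.exp (-(A * (H 0 + s)))) 0 := by fun_prop
  rw [Metric.continuousAt_iff] at hcont
  obtain ⟨δ', hδ'pos, hδ'⟩ := hcont ε hε
  set ε' := δ' / 2 with hε'
  have hε'pos : 0 < ε' := by positivity
  have hub1 : |Real.exp (-(A * (H 0 + ε'))) - Real.exp (-(A * (H 0 + 0)))| < ε := by
    have := hδ' (x := ε') (by rw [Real.dist_eq, sub_zero, abs_of_pos hε'pos]; linarith)
    simpa [Real.dist_eq] using this
  have hub2 : |Real.exp (-(A * (H 0 + -ε'))) - Real.exp (-(A * (H 0 + 0)))| < ε := by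
    have := hδ' (x := -ε') (by
      rw [Real.dist_eq, sub_zero, abs_neg, abs_of_pos hε'pos]; linarith)
    simpa [Real.dist_eq] using this
  -- choose δ for H-continuity
  obtain ⟨δ1, hδ1pos, hδ1⟩ := hHc ε' hε'pos
  set δ := min δ0 δ1 with hδ
  have hδpos : 0 < δ := lt_min hδ0pos hδ1pos
  -- eventual regime
  filter_upwards [eventually_gt_atTop (G 0), eventually_gt_atTop (M - Real.log δ / κ)]
    with t htG htT
  -- radii
  set r₁ := Real.exp (-(κ * (t + H 0 + ε'))) with hr₁
  set r₂ := Real.exp (-(κ * (t + H 0 - ε'))) with hr₂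
  have hr₁pos : 0 < r₁ := Real.exp_pos _
  have hr₂pos : 0 < r₂ := Real.exp_pos _
  have hMlt : Real.exp (-(κ * (t - M))) < δ := by
    rw [← Real.exp_log hδpos, Real.exp_lt_exp]
    have h3 := (lt_div_iff₀ hκpos).mp (show M - t < Real.log δ / κ by linarith)
    nlinarith
  have hr₁le : r₁ ≤ Real.exp (-(κ * (t - M))) := by
    rw [Real.exp_le_exp]
    have h9 : κ * (t - M) ≤ κ * (t + H 0 + ε') :=
      mul_le_mul_of_nonneg_left (by have := (abs_le.mp hM0).1; linarith) hκpos.le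
    linarith
  have hr₁δ : r₁ < δ := lt_of_le_of_lt hr₁le hMlt
  -- lower inclusion
  have hball : Metric.ball (0 : E n) r₁ \ {0} ⊆ {y ∈ Ω | t < G y} := by
    rintro y ⟨hyb, hy0'⟩
    have hy0 : y ≠ 0 := hy0'
    have hyn : ‖y‖ < r₁ := mem_ball_zero_iff.mp hyb
    have hypos : 0 < ‖y‖ := norm_pos_iff.mpr hy0
    have hyδ : ‖y‖ < δ := lt_trans hyn hr₁δ
    have hyΩ : y ∈ Ω := hδ0 (mem_ball_zero_iff.mpr (lt_of_lt_of_le hyδ (min_le_left _ _)))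
    have hyH : |H y - H 0| < ε' := by
      have := hδ1 (x := y) (by rw [dist_zero_right]; exact lt_of_lt_of_le hyδ (min_le_right _ _))
      rwa [Real.dist_eq] at this
    have hyH' : H y < H 0 + ε' := by have := (abs_lt.mp hyH).2; linarith
    refine ⟨hyΩ, ?_⟩
    rw [hdec y hyΩ hy0]
    have hlog : Real.log ‖y‖ < -(κ * (t + H 0 + ε')) := by
      calc Real.log ‖y‖ < Real.log r₁ := Real.log_lt_log hypos hyn
        _ = -(κ * (t + H 0 + ε')) := Real.log_exp _
    have h3 : κ⁻¹ * Real.log ‖y‖ < κ⁻¹ * -(κ * (t + H 0 + ε')) :=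
      mul_lt_mul_of_pos_left hlog (inv_pos.mpr hκpos)
    have h4 : κ⁻¹ * (κ * (t + H 0 + ε')) = t + H 0 + ε' := by field_simp
    linarith
  -- upper inclusion
  have hsub : {y ∈ Ω | t < G y} ⊆ Metric.ball (0 : E n) r₂ := by
    rintro y ⟨hyΩ, hyt⟩
    have hy0 : y ≠ 0 := by rintro rfl; linarith
    have hypos : 0 < ‖y‖ := norm_pos_iff.mpr hy0
    rw [hdec y hyΩ hy0] at hyt
    have hyM : |H y| ≤ M := by simpa [Real.norm_eq_abs] using hM y (subset_closure hyΩ)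
    -- t + H y < -κ⁻¹ log ‖y‖  ⟹  log ‖y‖ < -(κ (t + H y))
    have h5 : Real.log ‖y‖ < -(κ * (t + H y)) := by
      have h6 : κ * (t + H y) < κ * (-(κ⁻¹ * Real.log ‖y‖)) := by
        apply mul_lt_mul_of_pos_left _ hκpos
        linarith
      have h7 : κ * (κ⁻¹ * Real.log ‖y‖) = Real.log ‖y‖ := by field_simp
      linarith
    have hyδ : ‖y‖ < δ := by
      have h8 : Real.log ‖y‖ < -(κ * (t - M)) := by
        have h9 : κ * (t - M) ≤ κ * (t + H y) :=
          mul_le_mul_of_nonneg_left (by have := (abs_le.mp hyM).1; linarith) hκpos.le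
        linarith
      calc ‖y‖ = Real.exp (Real.log ‖y‖) := (Real.exp_log hypos).symm
        _ < Real.exp (-(κ * (t - M))) := Real.exp_lt_exp.mpr h8
        _ < δ := hMlt
    have hyH : |H y - H 0| < ε' := by
      have := hδ1 (x := y) (by rw [dist_zero_right]; exact lt_of_lt_of_le hyδ (min_le_right _ _))
      rwa [Real.dist_eq] at this
    have hyH' : H 0 - ε' < H y := by have := (abs_lt.mp hyH).1; linarith
    rw [mem_ball_zero_iff]
    calc ‖y‖ = Real.exp (Real.log ‖y‖) := (Real.exp_log hypos).symm
      _ < r₂ := by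
          rw [hr₂, Real.exp_lt_exp]
          have h9 : κ * (t + H 0 - ε') ≤ κ * (t + H y) :=
            mul_le_mul_of_nonneg_left (by linarith) hκpos.le
          linarith
  -- integral bounds
  have hfnn : ∀ y : E n, 0 ≤ ‖y‖ ^ (-β) := fun y => Real.rpow_nonneg (norm_nonneg y) _
  have hint2 : IntegrableOn (fun y : E n => ‖y‖ ^ (-β)) (Metric.ball 0 r₂) :=
    integrableOn_ball_rpow n hn hβ0 hβn hr₂pos
  have hintS : IntegrableOn (fun y : E n => ‖y‖ ^ (-β)) {y ∈ Ω | t < G y} :=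
    hint2.mono_set hsub
  have hleae : (Metric.ball (0 : E n) r₁ : Set (E n)) ≤ᵐ[volume] {y ∈ Ω | t < G y} := by
    rw [ae_le_set]
    refine measure_mono_null ?_ (measure_singleton (0 : E n))
    intro x hx
    by_contra hx0
    exact hx.2 (hball ⟨hx.1, hx0⟩)
  have hlow : sphereVol n * r₁ ^ ((n:ℝ) - β) / ((n:ℝ) - β) ≤
      ∫ y in {y ∈ Ω | t < G y}, ‖y‖ ^ (-β) := by
    rw [← integral_ball_rpow n hn hβn hr₁pos]
    exact setIntegral_mono_set hintS (ae_of_all _ hfnn) hleae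
  have hhigh : (∫ y in {y ∈ Ω | t < G y}, ‖y‖ ^ (-β)) ≤
      sphereVol n * r₂ ^ ((n:ℝ) - β) / ((n:ℝ) - β) := by
    rw [← integral_ball_rpow n hn hβn hr₂pos]
    exact setIntegral_mono_set hint2 (ae_of_all _ hfnn) (HasSubset.Subset.eventuallyLE hsub)
  -- arithmetic
  have hct : 0 < ν / (ω * Real.exp (-A * t)) := by positivity
  have hkey : ∀ u : ℝ, (ν / (ω * Real.exp (-A * t))) * (ω * Real.exp u ^ ν / ν) =
      Real.exp (u * ν + A * t) := by
    intro u
    rw [← Real.exp_mul, Real.exp_add]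
    have h1 := (Real.exp_pos (-A * t)).ne'
    have h2 := (Real.exp_pos (A * t)).ne'
    have hX : Real.exp (-A * t) = (Real.exp (A * t))⁻¹ := by
      rw [← Real.exp_neg]; ring_nf
    rw [hX]
    field_simp
  have e1 : (ν / (ω * Real.exp (-A * t))) * (ω * r₁ ^ ν / ν) =
      Real.exp (-(A * (H 0 + ε'))) := by
    rw [hr₁, hkey]
    congr 1
    rw [hA]; ring
  have e2 : (ν / (ω * Real.exp (-A * t))) * (ω * r₂ ^ ν / ν) =
      Real.exp (-(A * (H 0 + -ε'))) := by
    rw [hr₂, hkey]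
    congr 1
    rw [hA]; ring
  have hL1 : Real.exp (-(A * (H 0 + ε'))) ≤
      (ν / (ω * Real.exp (-A * t))) * ∫ y in {y ∈ Ω | t < G y}, ‖y‖ ^ (-β) := by
    rw [← e1]
    exact mul_le_mul_of_nonneg_left hlow hct.le
  have hL2 : (ν / (ω * Real.exp (-A * t))) * (∫ y in {y ∈ Ω | t < G y}, ‖y‖ ^ (-β)) ≤
      Real.exp (-(A * (H 0 + -ε'))) := by
    rw [← e2]
    exact mul_le_mul_of_nonneg_left hhigh hct.le
  rw [Real.dist_eq, abs_lt]
  have a1 := (abs_lt.mp hub1).1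
  have a2 := (abs_lt.mp hub2).2
  constructor <;> [linarith; linarith]
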